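/- Let g₆ have (1,0)-basis with dω¹ = i ω¹∧(ω³+ω̄³), dω² = −i ω²∧(ω³+ω̄³), dω³ = ω¹∧ω̄¹ + ω²∧ω̄², and let F be a generic Hermitian form as in 2F = i(r²ω¹∧ω̄¹ + s²ω²∧ω̄² + t²ω³∧ω̄³) + u ω¹∧ω̄² − ū ω²∧ω̄¹ + v ω²∧ω̄³ − v̄ ω³∧ω̄² + z ω¹∧ω̄³ − z̄ ω³∧ω̄¹. Then 2∂∂̄F ∧ F = (4|u|² − t⁴) ω¹²³∧ω̄¹²³. In particular, the first-Gauduchon constant γ₁(F) is positive, zero, or negative according to the sign of 4|u|² − t⁴; F is 1-st Gauduchon (∂∂̄F ∧ F = 0) iff |u| = t²/2, and no Hermitian F on g₆ is SKT. -/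

import Mathlib

/-!
Only two coefficients of `F` survive `∂∂̄`: `∂∂̄F = i t² ω¹²∧ω̄¹² + 2u ω¹³∧ω̄²³ − 2ū ω²³∧ω̄¹³`.
Wedging with `F`, each of these three terms pairs with exactly one complementary term of `2F`
(`i t² ω³∧ω̄³`, `−ū ω²∧ω̄¹`, `u ω¹∧ω̄²`), which gives `(4|u|² − t⁴) ω¹²³∧ω̄¹²³`. The volume form
is nonzero because the determinant factors through the top exterior power, so the 1-st
Gauduchon condition is `4|u|² = t⁴`; and `∂∂̄F ∧ ω³∧ω̄³ = i t² ω¹²³∧ω̄¹²³ ≠ 0` rules out SKT.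
-/

noncomputable section

/-- The space of invariant complex forms: the exterior algebra over the span of
`ω¹, ω², ω³, ω̄¹, ω̄², ω̄³` (indexed `0,…,5`). -/
abbrev Lambda : Type := ExteriorAlgebra ℂ (Fin 6 → ℂ)

/-- The generators `ω¹, ω², ω³, ω̄¹, ω̄², ω̄³` as degree-one elements. -/
def w (i : Fin 6) : Lambda := ExteriorAlgebra.ι ℂ (Pi.single i 1)

/-- Antiderivation property (Leibniz rule against `1`-forms): the defining extension
property of (the bigraded pieces of) the Chevalley–Eilenberg differential. -/
def IsAntideriv (D : Lambda →ₗ[ℂ] Lambda) : Prop :=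
  D 1 = 0 ∧ ∀ (v : Fin 6 → ℂ) (x : Lambda),
    D (ExteriorAlgebra.ι ℂ v * x) =
      D (ExteriorAlgebra.ι ℂ v) * x - ExteriorAlgebra.ι ℂ v * D x

/-- The generic Hermitian form
`2F = i(r²ω¹∧ω̄¹ + s²ω²∧ω̄² + t²ω³∧ω̄³) + uω¹∧ω̄² − ūω²∧ω̄¹ + vω²∧ω̄³ − v̄ω³∧ω̄²
  + zω¹∧ω̄³ − z̄ω³∧ω̄¹`. -/
def Fherm (r s t : ℝ) (u v z : ℂ) : Lambda :=
  (1 / 2 : ℂ) •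
    (Complex.I • ((r : ℂ) ^ 2 • (w 0 * w 3) + (s : ℂ) ^ 2 • (w 1 * w 4) +
        (t : ℂ) ^ 2 • (w 2 * w 5)) +
      u • (w 0 * w 4) - (starRingEnd ℂ) u • (w 1 * w 3) +
      v • (w 1 * w 5) - (starRingEnd ℂ) v • (w 2 * w 4) +
      z • (w 0 * w 5) - (starRingEnd ℂ) z • (w 2 * w 3))

/-- Positivity constraints making `Fherm r s t u v z` a Hermitian metric. -/
def HermPos (r s t : ℝ) (u v z : ℂ) : Prop :=
  r ≠ 0 ∧ s ≠ 0 ∧ t ≠ 0 ∧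
  r ^ 2 * s ^ 2 > Complex.normSq u ∧ s ^ 2 * t ^ 2 > Complex.normSq v ∧
  r ^ 2 * t ^ 2 > Complex.normSq z ∧
  r ^ 2 * s ^ 2 * t ^ 2 +
      2 * (Complex.I * (starRingEnd ℂ) u * (starRingEnd ℂ) v * z).re >
    t ^ 2 * Complex.normSq u + r ^ 2 * Complex.normSq v + s ^ 2 * Complex.normSq z

theorem ExteriorAlgebra.ιMulti_pi_single_ne_zero {R : Type*} [CommRing R] [Nontrivial R]
    (n : ℕ) : ExteriorAlgebra.ιMulti R n (fun i => (Pi.single i 1 : Fin n → R)) ≠ 0 := by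
  intro h
  have hdet := congrArg (exteriorPower.alternatingMapLinearEquiv Matrix.detRowAlternating)
    (Subtype.ext h : exteriorPower.ιMulti R n (fun i => (Pi.single i 1 : Fin n → R)) = 0)
  rw [exteriorPower.alternatingMapLinearEquiv_apply_ιMulti, map_zero] at hdet
  have hone : (fun i => (Pi.single i 1 : Fin n → R)) = (1 : Matrix (Fin n) (Fin n) R) := by
    ext i j
    simp [Matrix.one_apply, Pi.single_apply, eq_comm]
  rw [hone] at hdet
  exact one_ne_zero (Matrix.det_one.symm.trans hdet)

lemma w_vol_ne_zero : w 0 * w 1 * w 2 * w 3 * w 4 * w 5 ≠ 0 := by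
  have h := ExteriorAlgebra.ιMulti_pi_single_ne_zero (R := ℂ) 6
  rw [ExteriorAlgebra.ιMulti_apply] at h
  simpa [List.ofFn_succ, w, mul_assoc] using h

lemma w_mul_self (i : Fin 6) : w i * w i = 0 := ExteriorAlgebra.ι_sq_zero _

lemma w_mul_w_mul_self (i : Fin 6) (x : Lambda) : w i * (w i * x) = 0 := by
  rw [← mul_assoc, w_mul_self, zero_mul]

-- Stated only for `j < i`, so that as a rewrite rule it sorts generators into increasing order.
lemma w_mul_w_of_lt {i j : Fin 6} (_ : j < i) : w i * w j = -(w j * w i) :=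
  eq_neg_of_add_eq_zero_left (ExteriorAlgebra.ι_add_mul_swap _ _)

lemma w_mul_w_mul_of_lt {i j : Fin 6} (h : j < i) (x : Lambda) :
    w i * (w j * x) = -(w j * (w i * x)) := by
  rw [← mul_assoc, w_mul_w_of_lt h, neg_mul, mul_assoc]

lemma IsAntideriv.map_w_mul {D : Lambda →ₗ[ℂ] Lambda} (hD : IsAntideriv D) (i : Fin 6)
    (x : Lambda) : D (w i * x) = D (w i) * x - w i * D x :=
  hD.2 _ x

structure IsG6Delbar (Db : Lambda →ₗ[ℂ] Lambda) : Prop where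
  antideriv : IsAntideriv Db
  map_w0 : Db (w 0) = Complex.I • (w 0 * w 5)
  map_w1 : Db (w 1) = -Complex.I • (w 1 * w 5)
  map_w2 : Db (w 2) = w 0 * w 3 + w 1 * w 4
  map_w3 : Db (w 3) = -Complex.I • (w 3 * w 5)
  map_w4 : Db (w 4) = Complex.I • (w 4 * w 5)
  map_w5 : Db (w 5) = 0

structure IsG6Del (Dp : Lambda →ₗ[ℂ] Lambda) : Prop where
  antideriv : IsAntideriv Dp
  map_w0 : Dp (w 0) = Complex.I • (w 0 * w 2)
  map_w1 : Dp (w 1) = -Complex.I • (w 1 * w 2)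
  map_w2 : Dp (w 2) = 0
  map_w3 : Dp (w 3) = -Complex.I • (w 3 * w 2)
  map_w4 : Dp (w 4) = Complex.I • (w 4 * w 2)
  map_w5 : Dp (w 5) = w 3 * w 0 + w 4 * w 1

open Complex ComplexConjugate

def ddbarFherm (t : ℝ) (u : ℂ) : Lambda :=
  (I * t ^ 2) • (w 0 * w 1 * w 3 * w 4) + (2 * u) • (w 0 * w 2 * w 4 * w 5) -
    (2 * conj u) • (w 1 * w 2 * w 3 * w 5)

variable {Dp Db : Lambda →ₗ[ℂ] Lambda} (r s t : ℝ) (u v z : ℂ)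

lemma IsG6Delbar.map_Fherm (hDb : IsG6Delbar Db) :
    Db (Fherm r s t u v z) =
      (-conj v / 2) • (w 0 * w 3 * w 4) + (I * t ^ 2 / 2) • (w 0 * w 3 * w 5) +
      (-I * u) • (w 0 * w 4 * w 5) + (conj z / 2) • (w 1 * w 3 * w 4) +
      (-I * conj u) • (w 1 * w 3 * w 5) + (I * t ^ 2 / 2) • (w 1 * w 4 * w 5) +
      (-I * conj z / 2) • (w 2 * w 3 * w 5) + (I * conj v / 2) • (w 2 * w 4 * w 5) := by
  simp only [Fherm, map_smul, map_add, map_sub, hDb.antideriv.map_w_mul, hDb.map_w0, hDb.map_w1,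
    hDb.map_w2, hDb.map_w3, hDb.map_w4, hDb.map_w5, smul_mul_assoc, mul_smul_comm, mul_assoc,
    add_mul, neg_mul, mul_neg, w_mul_self, w_mul_w_of_lt, Fin.reduceLT, mul_zero]
  match_scalars <;> ring

lemma IsG6Del.map_map_Fherm (hDp : IsG6Del Dp) (hDb : IsG6Delbar Db) :
    Dp (Db (Fherm r s t u v z)) = ddbarFherm t u := by
  simp only [ddbarFherm, hDb.map_Fherm, map_smul, map_add, hDp.antideriv.map_w_mul, hDp.map_w0,
    hDp.map_w1, hDp.map_w2, hDp.map_w3, hDp.map_w4, hDp.map_w5, smul_mul_assoc, mul_smul_comm,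
    mul_assoc, mul_add, mul_sub, neg_mul, mul_neg, w_mul_self, w_mul_w_mul_self, w_mul_w_of_lt,
    w_mul_w_mul_of_lt, Fin.reduceLT, mul_zero, zero_mul]
  match_scalars <;> ring_nf <;> simp only [I_sq] <;> ring

lemma two_smul_ddbarFherm_mul_Fherm :
    (2 : ℂ) • (ddbarFherm t u * Fherm r s t u v z) =
      ((4 * normSq u - t ^ 4 : ℝ) : ℂ) • (w 0 * w 1 * w 2 * w 3 * w 4 * w 5) := by
  simp only [ddbarFherm, Fherm, smul_mul_assoc, mul_smul_comm, mul_assoc, mul_add, add_mul,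
    mul_sub, sub_mul, mul_neg, w_mul_self, w_mul_w_mul_self, w_mul_w_of_lt,
    w_mul_w_mul_of_lt, Fin.reduceLT, mul_zero]
  match_scalars
  push_cast [← mul_conj]
  ring_nf
  simp only [I_sq]
  ring

lemma ddbarFherm_mul_w2_w5 :
    ddbarFherm t u * (w 2 * w 5) = (I * t ^ 2) • (w 0 * w 1 * w 2 * w 3 * w 4 * w 5) := by
  simp only [ddbarFherm, smul_mul_assoc, mul_assoc, sub_mul, add_mul, mul_neg, w_mul_self,
    w_mul_w_mul_of_lt, Fin.reduceLT, mul_zero]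
  match_scalars
  ring

lemma ddbarFherm_ne_zero {t : ℝ} (ht : t ≠ 0) : ddbarFherm t u ≠ 0 := by
  intro h
  have hvol := ddbarFherm_mul_w2_w5 t u
  rw [h, zero_mul, eq_comm, smul_eq_zero] at hvol
  exact hvol.elim (mul_ne_zero I_ne_zero (pow_ne_zero 2 (ofReal_ne_zero.2 ht))) w_vol_ne_zero

lemma norm_eq_sq_div_two_iff : ‖u‖ = t ^ 2 / 2 ↔ 4 * normSq u - t ^ 4 = 0 := by
  rw [← sq_eq_sq₀ (norm_nonneg u) (by positivity), ← normSq_eq_norm_sq]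
  constructor <;> intro h <;> linarith

/-- on `g₆` (`dω¹ = iω¹∧(ω³+ω̄³)`, `dω² = −iω²∧(ω³+ω̄³)`,
`dω³ = ω¹∧ω̄¹ + ω²∧ω̄²`): `2∂∂̄F ∧ F = (4|u|² − t⁴) ω¹²³∧ω̄¹²³`; `F` is 1-st
Gauduchon iff `|u| = t²/2`, and no Hermitian `F` is SKT. -/
theorem stmt15
    (Dp Db : Lambda →ₗ[ℂ] Lambda) (hDp : IsAntideriv Dp) (hDb : IsAntideriv Db)
    (hp0 : Dp (w 0) = Complex.I • (w 0 * w 2))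
    (hp1 : Dp (w 1) = -Complex.I • (w 1 * w 2))
    (hp2 : Dp (w 2) = 0)
    (hp3 : Dp (w 3) = -Complex.I • (w 3 * w 2))
    (hp4 : Dp (w 4) = Complex.I • (w 4 * w 2))
    (hp5 : Dp (w 5) = w 3 * w 0 + w 4 * w 1)
    (hb0 : Db (w 0) = Complex.I • (w 0 * w 5))
    (hb1 : Db (w 1) = -Complex.I • (w 1 * w 5))
    (hb2 : Db (w 2) = w 0 * w 3 + w 1 * w 4)
    (hb3 : Db (w 3) = -Complex.I • (w 3 * w 5))
    (hb4 : Db (w 4) = Complex.I • (w 4 * w 5))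
    (hb5 : Db (w 5) = 0)
    (r s t : ℝ) (u v z : ℂ) (hF : HermPos r s t u v z) :
    (2 : ℂ) • (Dp (Db (Fherm r s t u v z)) * Fherm r s t u v z) =
      ((4 * Complex.normSq u - t ^ 4 : ℝ) : ℂ) • (w 0 * w 1 * w 2 * w 3 * w 4 * w 5) ∧
    (Dp (Db (Fherm r s t u v z)) * Fherm r s t u v z = 0 ↔ ‖u‖ = t ^ 2 / 2) ∧
    Dp (Db (Fherm r s t u v z)) ≠ 0 := by
  have hDel : IsG6Del Dp := ⟨hDp, hp0, hp1, hp2, hp3, hp4, hp5⟩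
  have hDelbar : IsG6Delbar Db := ⟨hDb, hb0, hb1, hb2, hb3, hb4, hb5⟩
  obtain ⟨-, -, ht, -⟩ := hF
  have hvol := two_smul_ddbarFherm_mul_Fherm r s t u v z
  rw [hDel.map_map_Fherm r s t u v z hDelbar]
  refine ⟨hvol, ?_, ddbarFherm_ne_zero u ht⟩
  rw [← smul_eq_zero_iff_right (two_ne_zero' ℂ), hvol, smul_eq_zero, or_iff_left w_vol_ne_zero,
    ofReal_eq_zero, norm_eq_sq_div_two_iff]
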